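/- For the quadratic form F(x₁,…,x_N) = (1/(2Δt))Σ_{n=0}^{N-1}(x_{n+1}−x_n)² + g(x_N) (with x₀ = 0) with g convex and smooth, the Hessian H of F is positive definite, and in the pure Brownian case g″ ≥ 0 the (1,1) entry of H^{-1} satisfies (H^{-1})_{1,1} ≤ Δt, i.e., conditioning reduces the one-step variance relative to the unconditioned step variance Δt. -/

import Mathlib

/-!
Write `H = Δt⁻¹ DᵀD + c eₙeₙᵀ`, where `(Dx)ₖ = xₖ - xₖ₋₁` (with `x₀ = 0`) is the backward
difference. `D` is unitriangular, hence invertible, so `H` is positive definite. Since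
`(Dx)₁ = x₁`, the quadratic form satisfies `x₁² ≤ Δt · xᵀHx`. Testing this on `y = H⁻¹e₁`, for
which `yᵀHy = y₁ = (H⁻¹)₁₁ > 0`, gives `(H⁻¹)₁₁² ≤ Δt · (H⁻¹)₁₁`.
-/

open Matrix

/-- The Hessian of the discrete Brownian-motion action
`F(x₁,…,x_N) = (1/(2Δt)) Σ (x_{n+1}−x_n)² + g(x_N)` (with `x₀ = 0`): the tridiagonal
discrete Laplacian `(1/Δt)·tridiag(−1,2,−1)` with last diagonal entry `1/Δt + c`,
where `c = g″(x_N) ≥ 0`. -/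
noncomputable def pathHessian (N : ℕ) (Δt c : ℝ) : Matrix (Fin N) (Fin N) ℝ :=
  fun i j =>
    if i = j then (if (i : ℕ) = N - 1 then 1 / Δt + c else 2 / Δt)
    else if (i : ℕ) + 1 = (j : ℕ) ∨ (j : ℕ) + 1 = (i : ℕ) then -(1 / Δt) else 0

theorem Matrix.PosDef.inv_apply_self_le {n : Type*} [Fintype n] [DecidableEq n]
    {A : Matrix n n ℝ} (hA : A.PosDef) (i : n) {t : ℝ}
    (h : ∀ x : n → ℝ, x i ^ 2 ≤ t * (x ⬝ᵥ A *ᵥ x)) : A⁻¹ i i ≤ t := by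
  set y := A⁻¹ *ᵥ Pi.single i 1
  have hAy : A *ᵥ y = Pi.single i 1 := by
    rw [mulVec_mulVec, mul_nonsing_inv _ ((isUnit_iff_isUnit_det A).mp hA.isUnit), one_mulVec]
  have hyi : y i = A⁻¹ i i := by simp [y, mulVec_single]
  have hquad : y ⬝ᵥ A *ᵥ y = A⁻¹ i i := by rw [hAy, dotProduct_single, mul_one, hyi]
  have hpos : 0 < A⁻¹ i i := hA.inv.diag_pos
  have hy := h y
  rw [hquad, hyi, sq] at hy
  exact le_of_mul_le_mul_right hy hpos

def backwardDiff (N : ℕ) : Matrix (Fin N) (Fin N) ℝ :=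
  of fun i j => (if (j : ℕ) = i then 1 else 0) - (if (j : ℕ) + 1 = i then 1 else 0)

theorem backwardDiff_isLowerTriangular (N : ℕ) : (backwardDiff N).IsLowerTriangular := by
  intro i j hij
  have : (i : ℕ) < j := hij
  simp only [backwardDiff, of_apply]
  rw [if_neg (by omega), if_neg (by omega), sub_zero]

theorem det_backwardDiff (N : ℕ) : (backwardDiff N).det = 1 := by
  rw [det_of_isLowerTriangular _ (backwardDiff_isLowerTriangular N)]
  simp [backwardDiff]

theorem backwardDiff_mulVec_injective (N : ℕ) : Function.Injective (backwardDiff N).mulVec :=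
  mulVec_injective_iff_isUnit.mpr <| (isUnit_iff_isUnit_det _).mpr <| by
    simp [det_backwardDiff]

theorem backwardDiff_mulVec_apply_zero {N : ℕ} (hN : 0 < N) (x : Fin N → ℝ) :
    (backwardDiff N *ᵥ x) ⟨0, hN⟩ = x ⟨0, hN⟩ := by
  simp only [backwardDiff, mulVec, dotProduct, of_apply, Nat.add_one_ne_zero, if_false,
    sub_zero, ite_mul, one_mul, zero_mul]
  rw [Finset.sum_eq_single ⟨0, hN⟩] <;> simp +contextual [Fin.ext_iff]

theorem transpose_backwardDiff_mul_self_apply (N : ℕ) (i j : Fin N) :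
    ((backwardDiff N)ᵀ * backwardDiff N) i j =
      (if (i : ℕ) = j then 1 else 0) - (if (i : ℕ) + 1 = j then 1 else 0)
        - (if (j : ℕ) + 1 = i then 1 else 0)
        + (if (i : ℕ) = j ∧ (i : ℕ) + 1 < N then 1 else 0) := by
  simp only [mul_apply, transpose_apply, backwardDiff, of_apply]
  rw [Fin.sum_univ_eq_sum_range (fun k => ((if (i : ℕ) = k then (1 : ℝ) else 0)
    - (if (i : ℕ) + 1 = k then 1 else 0)) * ((if (j : ℕ) = k then 1 else 0)
    - (if (j : ℕ) + 1 = k then 1 else 0)))]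
  simp only [mul_sub, sub_mul, Finset.sum_sub_distrib, ite_mul, one_mul, zero_mul,
    Finset.sum_ite_eq, Finset.mem_range]
  have := i.isLt
  split_ifs <;> first | ring1 | (exfalso; omega)

theorem pathHessian_eq_smul_add_diagonal (N : ℕ) (Δt c : ℝ) :
    pathHessian N Δt c = Δt⁻¹ • ((backwardDiff N)ᵀ * backwardDiff N)
      + diagonal (fun i : Fin N => if (i : ℕ) = N - 1 then c else 0) := by
  ext i j
  have := i.isLt
  simp only [pathHessian, Matrix.add_apply, Matrix.smul_apply, smul_eq_mul, diagonal_apply,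
    transpose_backwardDiff_mul_self_apply, Fin.ext_iff]
  split_ifs <;> first | ring1 | (exfalso; omega)

theorem posSemidef_pathHessian_sub (N : ℕ) (Δt : ℝ) {c : ℝ} (hc : 0 ≤ c) :
    (pathHessian N Δt c - Δt⁻¹ • ((backwardDiff N)ᵀ * backwardDiff N)).PosSemidef := by
  rw [pathHessian_eq_smul_add_diagonal, add_sub_cancel_left]
  exact .diagonal fun i => by dsimp only; split_ifs <;> simp [hc]

theorem posDef_pathHessian (N : ℕ) {Δt : ℝ} (hΔt : 0 < Δt) {c : ℝ} (hc : 0 ≤ c) :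
    (pathHessian N Δt c).PosDef := by
  have hD : ((backwardDiff N)ᵀ * backwardDiff N).PosDef := by
    simpa [conjTranspose_eq_transpose_of_trivial] using
      PosDef.conjTranspose_mul_self _ (backwardDiff_mulVec_injective N)
  simpa using (hD.smul (inv_pos.mpr hΔt)).add_posSemidef (posSemidef_pathHessian_sub N Δt hc)

theorem sq_apply_zero_le_mul_dotProduct_pathHessian_mulVec {N : ℕ} (hN : 0 < N) {Δt : ℝ}
    (hΔt : 0 < Δt) {c : ℝ} (hc : 0 ≤ c) (x : Fin N → ℝ) :
    x ⟨0, hN⟩ ^ 2 ≤ Δt * (x ⬝ᵥ pathHessian N Δt c *ᵥ x) := by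
  set y := backwardDiff N *ᵥ x
  have hrest := (posSemidef_pathHessian_sub N Δt hc).dotProduct_mulVec_nonneg x
  have hDD : x ⬝ᵥ ((backwardDiff N)ᵀ * backwardDiff N) *ᵥ x = y ⬝ᵥ y := by
    rw [← mulVec_mulVec, mulVec_transpose, dotProduct_comm, ← dotProduct_mulVec]
  rw [star_trivial, sub_mulVec, dotProduct_sub, smul_mulVec, dotProduct_smul, smul_eq_mul,
    hDD] at hrest
  have hy0 : x ⟨0, hN⟩ ^ 2 ≤ y ⬝ᵥ y := by
    rw [← backwardDiff_mulVec_apply_zero hN x, sq]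
    exact Finset.single_le_sum (f := fun k => y k * y k) (fun k _ => mul_self_nonneg _)
      (Finset.mem_univ _)
  calc x ⟨0, hN⟩ ^ 2 ≤ Δt * (Δt⁻¹ * (y ⬝ᵥ y)) := by field_simp; exact hy0
    _ ≤ Δt * (x ⬝ᵥ pathHessian N Δt c *ᵥ x) := by gcongr; linarith

/-- The Hessian `H` of the discrete action is positive definite, and when `g″ ≥ 0` the
`(1,1)` entry of `H⁻¹` satisfies `(H⁻¹)_{1,1} ≤ Δt`: conditioning reduces the one-step
variance relative to the unconditioned step variance `Δt`. -/
theorem hessian_posDef_and_inv_entry_le (N : ℕ) (hN : 1 ≤ N)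
    (Δt : ℝ) (hΔt : 0 < Δt) (c : ℝ) (hc : 0 ≤ c) :
    (pathHessian N Δt c).PosDef ∧
      (pathHessian N Δt c)⁻¹ ⟨0, by omega⟩ ⟨0, by omega⟩ ≤ Δt := by
  have hH := posDef_pathHessian N hΔt hc
  exact ⟨hH, hH.inv_apply_self_le _ (sq_apply_zero_le_mul_dotProduct_pathHessian_mulVec _ hΔt hc)⟩
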